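/- For every 0 ≤ p ≤ ℓ and every face F, the action of F on V maps the subspace W^p V into itself; that is, W^p V is a submodule of V under the face-algebra action. -/

import Mathlib

open Finset
open scoped Classical

noncomputable section

/-- The face product of two sign vectors. -/
def faceMul {ι : Type*} (σ τ : ι → SignType) : ι → SignType :=
  fun i => if σ i = 0 then τ i else σ i

variable {ℓ : ℕ} {ι : Type*} [Fintype ι]

def IsFace (f : ι → ((Fin ℓ → ℝ) →ₗ[ℝ] ℝ)) (σ : ι → SignType) : Prop :=
  {x : Fin ℓ → ℝ | ∀ i, SignType.sign (f i x) = σ i}.Nonempty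

def IsChamber (f : ι → ((Fin ℓ → ℝ) →ₗ[ℝ] ℝ)) (σ : ι → SignType) : Prop :=
  IsFace f σ ∧ ∀ i, σ i ≠ 0

variable (f : ι → ((Fin ℓ → ℝ) →ₗ[ℝ] ℝ))

def Chambers := {σ : ι → SignType // IsChamber f σ}

instance : Fintype (Chambers f) := Subtype.fintype _

/-- The Heaviside function of the hyperplane `H_i`. -/
def heav (i : ι) : Chambers f → ℝ := fun C => if C.1 i = 1 then 1 else 0

/-- The Heaviside monomial `x_I = ∏_{i ∈ I} x_i`. -/
def heavMon (I : Finset ι) : Chambers f → ℝ := fun C => ∏ i ∈ I, heav f i C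

/-- The degree filtration `P_p`: the span of the Heaviside monomials of degree at most `p`. -/
def Pfil (p : ℕ) : Submodule ℝ (Chambers f → ℝ) :=
  Submodule.span ℝ {g | ∃ I : Finset ι, I.card ≤ p ∧ g = heavMon f I}

/-- `P_{p-1}`, with the convention `P_{−1} = 0`. -/
def Pprev : ℕ → Submodule ℝ (Chambers f → ℝ)
  | 0 => ⊥
  | q + 1 => Pfil f q

/-- The pairing `v ↦ ⟨g, v⟩ = ∑_C g(C)·v_C` on the free module on chambers. -/
def pairFin (g : Chambers f → ℝ) : (Chambers f →₀ ℝ) →ₗ[ℝ] ℝ :=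
  ∑ C : Chambers f, g C • Finsupp.lapply C

/-- The dual filtration `W^p V = {v : ⟨g, v⟩ = 0 for all g ∈ P_{p−1}}` (so `W^0 V = V`). -/
def Wfil (p : ℕ) : Submodule ℝ (Chambers f →₀ ℝ) :=
  ⨅ g ∈ (Pprev f p : Set (Chambers f → ℝ)), LinearMap.ker (pairFin f g)

/-- The basis vector of the free module on chambers indexed by a sign vector:
`e σ = single σ 1` when `σ` is a chamber (and junk `0` otherwise). -/
def eC (σ : ι → SignType) : Chambers f →₀ ℝ :=
  if h : IsChamber f σ then Finsupp.single ⟨σ, h⟩ 1 else 0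

/-- The linear action of a face `σ` on the free module on chambers: `e C ↦ e (σ∘C)`. -/
def faceAct (σ : ι → SignType) : (Chambers f →₀ ℝ) →ₗ[ℝ] (Chambers f →₀ ℝ) :=
  Finsupp.lsum ℝ fun C => LinearMap.toSpanSingleton ℝ _ (eC f (faceMul σ C.1))

/-! On the free module a face `F` acts as the pushforward along the map `C ↦ F∘C` of
chambers, so by duality it preserves `W^p V` as soon as pulling back along `C ↦ F∘C` preserves
`P_{p-1}`. It does: the Heaviside function `x_i` pulls back to itself when `F_i = 0` and to a
constant otherwise, so `x_I` pulls back to a multiple of `x_{I'}` with `I' ⊆ I`. -/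

open Filter Topology

lemma eventually_sign_add_smul {E : Type*} [AddCommGroup E] [Module ℝ E] (φ : E →ₗ[ℝ] ℝ)
    (x y : E) :
    ∀ᶠ ε in 𝓝[>] (0 : ℝ), SignType.sign (φ (x + ε • y)) =
      if SignType.sign (φ x) = 0 then SignType.sign (φ y) else SignType.sign (φ x) := by
  simp only [map_add, map_smul, smul_eq_mul, sign_eq_zero_iff]
  split_ifs with hx
  · filter_upwards [self_mem_nhdsWithin] with ε (hε : 0 < ε)
    rw [hx, zero_add, sign_mul, sign_pos hε, one_mul]
  · have hcont : ContinuousAt (fun ε : ℝ => SignType.sign (φ x + ε * φ y)) 0 :=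
      (continuousAt_sign_of_ne_zero hx).comp_of_eq (by fun_prop) (by simp)
    rw [ContinuousAt, nhds_discrete SignType, tendsto_pure] at hcont
    simp only [zero_mul, add_zero] at hcont
    exact nhdsWithin_le_nhds hcont

lemma isFace_faceMul {σ τ : ι → SignType} (hσ : IsFace f σ) (hτ : IsFace f τ) :
    IsFace f (faceMul σ τ) := by
  obtain ⟨x, hx⟩ := hσ
  obtain ⟨y, hy⟩ := hτ
  obtain ⟨ε, hε⟩ := (eventually_all.2 fun i => eventually_sign_add_smul (f i) x y).exists
  exact ⟨x + ε • y, fun i => by simp only [hε i, hx i, hy i, faceMul]⟩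

lemma isChamber_faceMul {σ τ : ι → SignType} (hσ : IsFace f σ) (hτ : IsChamber f τ) :
    IsChamber f (faceMul σ τ) := by
  refine ⟨isFace_faceMul f hσ hτ.1, fun i => ?_⟩
  unfold faceMul
  split_ifs with h
  exacts [hτ.2 i, h]

def faceMulChamber {σ : ι → SignType} (hσ : IsFace f σ) (C : Chambers f) : Chambers f :=
  ⟨faceMul σ C.1, isChamber_faceMul f hσ C.2⟩

lemma faceAct_eq_lmapDomain {σ : ι → SignType} (hσ : IsFace f σ) :
    faceAct f σ = Finsupp.lmapDomain ℝ ℝ (faceMulChamber f hσ) := by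
  refine Finsupp.lhom_ext fun C r => ?_
  simp only [faceAct, Finsupp.lsum_single, LinearMap.toSpanSingleton_apply, eC,
    dif_pos (isChamber_faceMul f hσ C.2), Finsupp.lmapDomain_apply, Finsupp.mapDomain_single]
  exact Finsupp.smul_single_one _ _

lemma pairFin_single (g : Chambers f → ℝ) (C : Chambers f) (r : ℝ) :
    pairFin f g (Finsupp.single C r) = g C * r := by
  simp [pairFin, Finsupp.single_apply]

lemma pairFin_mapDomain (g : Chambers f → ℝ) (φ : Chambers f → Chambers f)
    (v : Chambers f →₀ ℝ) :
    pairFin f g (Finsupp.mapDomain φ v) = pairFin f (g ∘ φ) v := by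
  have hcomp : (pairFin f g).comp (Finsupp.lmapDomain ℝ ℝ φ) = pairFin f (g ∘ φ) :=
    Finsupp.lhom_ext fun C r => by simp [pairFin_single]
  exact LinearMap.congr_fun hcomp v

lemma mapDomain_mem_Wfil {p : ℕ} {φ : Chambers f → Chambers f}
    (hφ : ∀ g ∈ Pprev f p, g ∘ φ ∈ Pprev f p) {v : Chambers f →₀ ℝ} (hv : v ∈ Wfil f p) :
    Finsupp.mapDomain φ v ∈ Wfil f p := by
  simp only [Wfil, Submodule.mem_iInf, LinearMap.mem_ker, SetLike.mem_coe] at hv ⊢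
  intro g hg
  rw [pairFin_mapDomain]
  exact hv _ (hφ g hg)

lemma heav_faceMulChamber {σ : ι → SignType} (hσ : IsFace f σ) (i : ι) (C : Chambers f) :
    heav f i (faceMulChamber f hσ C) =
      if σ i = 0 then heav f i C else if σ i = 1 then 1 else 0 := by
  by_cases h : σ i = 0 <;> simp [heav, faceMulChamber, faceMul, h]

lemma heavMon_comp_faceMulChamber {σ : ι → SignType} (hσ : IsFace f σ) (I : Finset ι) :
    heavMon f I ∘ faceMulChamber f hσ =
      (∏ i ∈ I with σ i ≠ 0, if σ i = 1 then (1 : ℝ) else 0) •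
        heavMon f {i ∈ I | σ i = 0} := by
  funext C
  simp only [Function.comp_apply, Pi.smul_apply, smul_eq_mul, heavMon]
  rw [← prod_filter_mul_prod_filter_not I (σ · = 0), mul_comm]
  congr 1 <;> refine prod_congr rfl fun i hi => ?_ <;>
    simp [heav_faceMulChamber, (mem_filter.1 hi).2]

lemma comp_faceMulChamber_mem_Pfil {σ : ι → SignType} (hσ : IsFace f σ) {q : ℕ}
    {g : Chambers f → ℝ} (hg : g ∈ Pfil f q) : g ∘ faceMulChamber f hσ ∈ Pfil f q := by
  suffices Pfil f q ≤ (Pfil f q).comap (LinearMap.funLeft ℝ ℝ (faceMulChamber f hσ)) from this hg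
  refine Submodule.span_le.2 ?_
  rintro _ ⟨I, hI, rfl⟩
  change heavMon f I ∘ faceMulChamber f hσ ∈ Pfil f q
  rw [heavMon_comp_faceMulChamber]
  exact Submodule.smul_mem _ _ <|
    Submodule.subset_span ⟨_, (card_filter_le _ _).trans hI, rfl⟩

lemma comp_faceMulChamber_mem_Pprev {σ : ι → SignType} (hσ : IsFace f σ) {p : ℕ}
    {g : Chambers f → ℝ} (hg : g ∈ Pprev f p) : g ∘ faceMulChamber f hσ ∈ Pprev f p := by
  cases p with
  | zero =>
    rw [Pprev, Submodule.mem_bot] at hg ⊢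
    rw [hg]
    rfl
  | succ q => exact comp_faceMulChamber_mem_Pfil f hσ hg

theorem faceAct_mem_Wfil_general {ℓ : ℕ} {ι : Type*} [Fintype ι]
    (f : ι → ((Fin ℓ → ℝ) →ₗ[ℝ] ℝ)) :
    ∀ p ≤ ℓ, ∀ σ : ι → SignType, IsFace f σ →
      ∀ v ∈ Wfil f p, faceAct f σ v ∈ Wfil f p := by
  intro p _ σ hσ v hv
  rw [faceAct_eq_lmapDomain f hσ, Finsupp.lmapDomain_apply]
  exact mapDomain_mem_Wfil f (fun g hg => comp_faceMulChamber_mem_Pprev f hσ hg) hv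

/-- For every `0 ≤ p ≤ ℓ`, the subspace `W^p V` is stable under the face-algebra action:
it is a submodule of `V` for the action of the face semigroup. -/
theorem faceAct_mem_Wfil {ℓ : ℕ} (hℓ : 1 ≤ ℓ) {ι : Type*} [Fintype ι] [Nonempty ι]
    (f : ι → ((Fin ℓ → ℝ) →ₗ[ℝ] ℝ)) (hf : ∀ i, f i ≠ 0)
    (hess : (⨅ i, LinearMap.ker (f i)) = ⊥) :
    ∀ p ≤ ℓ, ∀ σ : ι → SignType, IsFace f σ →
      ∀ v ∈ Wfil f p, faceAct f σ v ∈ Wfil f p :=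
  faceAct_mem_Wfil_general f

end
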